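/- Let f be a monic real polynomial of degree n ≥ 1 satisfying Assumption 1, and let p and q be its even/odd splitting. Then p(x) > 0 and q(x) > 0 for every real x > 0. -/

import Mathlib

/-!
Up to the sign `(-1)^n`, `f(-X)` is a monic real polynomial with all its complex roots in the
closed left half-plane. Over `ℝ` it splits into factors `X - r` with `r ≤ 0` and
`X² - 2 Re z X + |z|²` with `Re z ≤ 0`, all with nonnegative coefficients, hence
`(-1)^(n+j) coeff_j f ≥ 0`: `p` and `q` have nonnegative coefficients. Then `p x ≥ x^n > 0`, and
`q` contains `a_{n-1} x^{n-1}`, where `a_{n-1}` is the sum of the real parts of the roots of `f`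
by Vieta's formula, which is positive.
-/

open Polynomial

namespace Polynomial

section OrderedRing

variable {R : Type*}

lemma coeff_mul_nonneg [Semiring R] [PartialOrder R] [IsOrderedRing R] {p q : R[X]}
    (hp : ∀ k, 0 ≤ p.coeff k) (hq : ∀ k, 0 ≤ q.coeff k) (k : ℕ) : 0 ≤ (p * q).coeff k := by
  rw [coeff_mul]
  exact Finset.sum_nonneg fun _ _ => mul_nonneg (hp _) (hq _)

variable [Ring R] [PartialOrder R] [IsOrderedRing R]

lemma coeff_X_sub_C_nonneg {r : R} (hr : r ≤ 0) (k : ℕ) : 0 ≤ (X - C r).coeff k := by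
  rcases k with _ | _ | k <;> simp [coeff_X, coeff_C, hr]

lemma coeff_X_sq_sub_C_mul_X_add_C_nonneg {a b : R} (ha : a ≤ 0) (hb : 0 ≤ b) (k : ℕ) :
    0 ≤ (X ^ 2 - C a * X + C b).coeff k := by
  rcases k with _ | _ | _ | k <;> simp [coeff_X, coeff_C, coeff_X_pow, ha, hb]

end OrderedRing

lemma coeff_neg_one_pow_mul_comp_neg_X {R : Type*} [Ring R] (p : R[X]) (n k : ℕ) :
    ((-1) ^ n * p.comp (-X)).coeff k = (-1) ^ (n + k) * p.coeff k := by
  have : (-X : R[X]) = C (-1) * X := by simp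
  rw [this, ← C_1, ← C_neg, ← C_pow, coeff_C_mul, comp_C_mul_X_coeff, pow_add, mul_assoc,
    ((Commute.neg_one_right _).pow_right k).eq]

lemma exists_monic_dvd_coeff_nonneg {g : ℝ[X]} (hg : 0 < g.degree)
    (hroots : ∀ z : ℂ, aeval z g = 0 → z.re ≤ 0) :
    ∃ q : ℝ[X], q ∣ g ∧ q.Monic ∧ 0 < q.natDegree ∧ ∀ k, 0 ≤ q.coeff k := by
  obtain ⟨z, hz⟩ := IsAlgClosed.exists_aeval_eq_zero ℂ g hg.ne'
  have hre := hroots z hz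
  by_cases him : z.im = 0
  · refine ⟨X - C z.re, dvd_iff_isRoot.mpr ?_, monic_X_sub_C _, by simp,
      coeff_X_sub_C_nonneg hre⟩
    rw [← Complex.re_add_im z, him, Complex.ofReal_zero, zero_mul, add_zero,
      ← Complex.coe_algebraMap, aeval_algebraMap_apply_eq_algebraMap_eval] at hz
    exact (FaithfulSMul.algebraMap_eq_zero_iff ℝ ℂ).mp hz
  · have hdeg : (X ^ 2 - C (2 * z.re) * X + C (‖z‖ ^ 2)).natDegree = 2 := by compute_degree!
    exact ⟨_, quadratic_dvd_of_aeval_eq_zero_im_ne_zero g hz him, by monicity!,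
      by omega, coeff_X_sq_sub_C_mul_X_add_C_nonneg (by linarith) (by positivity)⟩

theorem Monic.coeff_nonneg_of_forall_re_nonpos {g : ℝ[X]} (hg : g.Monic)
    (hroots : ∀ z : ℂ, aeval z g = 0 → z.re ≤ 0) (k : ℕ) : 0 ≤ g.coeff k := by
  induction hn : g.natDegree using Nat.strong_induction_on generalizing g k with
  | _ n ih =>
  rcases Nat.eq_zero_or_pos n with rfl | hpos
  · rw [hg.natDegree_eq_zero.mp hn, coeff_one]
    positivity
  obtain ⟨q, ⟨g₁, rfl⟩, hqm, hqdeg, hqc⟩ :=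
    exists_monic_dvd_coeff_nonneg (natDegree_pos_iff_degree_pos.mp (hn ▸ hpos)) hroots
  have hg₁ : g₁.Monic := hqm.of_mul_monic_left hg
  have hdeg : (q * g₁).natDegree = q.natDegree + g₁.natDegree := hqm.natDegree_mul hg₁
  exact coeff_mul_nonneg hqc
    (fun j => ih _ (by omega) hg₁ (fun z hz => hroots z (by simp [hz])) j rfl) k

theorem Monic.neg_one_pow_mul_coeff_nonneg {f : ℝ[X]} (hf : f.Monic)
    (hroots : ∀ z : ℂ, aeval z f = 0 → 0 ≤ z.re) (k : ℕ) :
    0 ≤ (-1) ^ (f.natDegree + k) * f.coeff k := by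
  rw [← coeff_neg_one_pow_mul_comp_neg_X]
  refine hf.neg_one_pow_natDegree_mul_comp_neg_X.coeff_nonneg_of_forall_re_nonpos
    (fun z hz => ?_) k
  have : aeval (-z) f = 0 := by simpa [aeval_comp] using hz
  simpa using hroots _ this

theorem Monic.nextCoeff_neg {f : ℝ[X]} (hf : f.Monic)
    (hroots : ∀ z : ℂ, aeval z f = 0 → 0 ≤ z.re) (hpos : ∃ z : ℂ, aeval z f = 0 ∧ 0 < z.re) :
    f.nextCoeff < 0 := by
  set F := f.map (algebraMap ℝ ℂ)
  have hF : F.Monic := hf.map _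
  have hmem (z : ℂ) : z ∈ F.roots ↔ aeval z f = 0 := by
    rw [mem_roots hF.ne_zero, IsRoot, eval_map, aeval_def]
  have hvieta : (f.nextCoeff : ℂ) = -F.roots.sum := by
    rw [← (IsAlgClosed.splits F).nextCoeff_eq_neg_sum_roots_of_monic hF,
      nextCoeff_map (algebraMap ℝ ℂ).injective]
    rfl
  have hre : f.nextCoeff = -(F.roots.map Complex.re).sum := by
    rw [← Complex.ofReal_re f.nextCoeff, hvieta, Complex.neg_re]
    exact congrArg Neg.neg (map_multiset_sum Complex.reAddGroupHom F.roots)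
  obtain ⟨z, hz, hzre⟩ := hpos
  have : 0 < (F.roots.map Complex.re).sum := by
    simpa using Multiset.sum_lt_sum (f := 0) (fun w hw => hroots w ((hmem w).mp hw))
      ⟨z, (hmem z).mpr hz, hzre⟩
  linarith

end Polynomial

lemma sum_range_ite_mul_pow_pos {n j₀ : ℕ} {P : ℕ → Prop} [DecidablePred P] {c : ℕ → ℝ}
    {x : ℝ} (hx : 0 < x) (hc : ∀ j, P j → 0 ≤ c j) (hj₀ : j₀ ≤ n) (hPj₀ : P j₀)
    (hcj₀ : 0 < c j₀) : 0 < ∑ j ∈ Finset.range (n + 1), if P j then c j * x ^ j else 0 := by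
  refine Finset.sum_pos' (fun j _ => ?_) ⟨j₀, by simpa [Nat.lt_succ_iff], ?_⟩
  · split_ifs with hj
    exacts [mul_nonneg (hc j hj) (by positivity), le_rfl]
  · rw [if_pos hPj₀]
    positivity

theorem stmt5_general (f : Polynomial ℝ) (n : ℕ)
    (hmonic : f.Monic) (hdeg : f.natDegree = n)
    (has1 : ∀ z : ℂ, (Polynomial.aeval z) f = 0 → 0 ≤ z.re)
    (has2 : ∃ z : ℂ, (Polynomial.aeval z) f = 0 ∧ 0 < z.re)
    (p q : ℝ → ℝ)
    (hp : ∀ x : ℝ, p x =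
      ∑ j ∈ Finset.range (n + 1), if (n + j) % 2 = 0 then f.coeff j * x ^ j else 0)
    (hq : ∀ x : ℝ, q x =
      ∑ j ∈ Finset.range (n + 1), if (n + j) % 2 = 1 then -(f.coeff j) * x ^ j else 0) :
    ∀ x : ℝ, 0 < x → 0 < p x ∧ 0 < q x := by
  have hsign := hmonic.neg_one_pow_mul_coeff_nonneg has1
  rw [hdeg] at hsign
  have hnext := hmonic.nextCoeff_neg has1 has2
  have hn : 0 < n := hdeg ▸ natDegree_pos_of_nextCoeff_ne_zero hnext.ne
  rw [nextCoeff_of_natDegree_pos (hdeg ▸ hn), hdeg] at hnext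
  intro x hx
  refine ⟨hp x ▸ sum_range_ite_mul_pow_pos hx (fun j hj => ?_) le_rfl (by omega) ?_,
    hq x ▸ sum_range_ite_mul_pow_pos hx (fun j hj => ?_) (Nat.sub_le n 1) (by omega) ?_⟩
  · simpa [(Nat.even_iff.mpr hj).neg_one_pow] using hsign j
  · simp [← hdeg, hmonic.coeff_natDegree]
  · simpa [(Nat.odd_iff.mpr hj).neg_one_pow] using hsign j
  · linarith

/-- Let `f` be a monic real polynomial of degree `n ≥ 1` satisfying
Assumption 1 (all complex roots have nonnegative real part, at least one has positive
real part), and let `p`, `q` be its even/odd splitting: `p` collects the terms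
`a_{n-2i} x^{n-2i}` and `q` the terms `a_{n-(2i+1)} x^{n-(2i+1)}` where
`a_j = (-1)^(n-j) coeff_j f`, so that `f = p - q` and both have nonnegative
coefficients. Then `p x > 0` and `q x > 0` for every real `x > 0`. -/
theorem stmt5 (f : Polynomial ℝ) (n : ℕ) (hn : 1 ≤ n)
    (hmonic : f.Monic) (hdeg : f.natDegree = n)
    (has1 : ∀ z : ℂ, (Polynomial.aeval z) f = 0 → 0 ≤ z.re)
    (has2 : ∃ z : ℂ, (Polynomial.aeval z) f = 0 ∧ 0 < z.re)
    (p q : ℝ → ℝ)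
    (hp : ∀ x : ℝ, p x =
      ∑ j ∈ Finset.range (n + 1), if (n + j) % 2 = 0 then f.coeff j * x ^ j else 0)
    (hq : ∀ x : ℝ, q x =
      ∑ j ∈ Finset.range (n + 1), if (n + j) % 2 = 1 then -(f.coeff j) * x ^ j else 0) :
    ∀ x : ℝ, 0 < x → 0 < p x ∧ 0 < q x :=
  stmt5_general f n hmonic hdeg has1 has2 p q hp hq
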